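/- arXiv:1110.3863 — 7 statements merged into one kernel-verified Lean document; each statement's English description precedes it below -/
import Mathlib

section
/- Let L be a number field and let x ∈ 𝓞_L. Suppose Γ is a subgroup of SL(2, 𝓞_L) such that the matrix μ = [[1, x], [0, 1]] belongs to Γ, Γ equals the normal closure of {μ} in Γ (μ normally generates Γ), and Γ contains at least one matrix whose lower-left entry is nonzero. Then x is a unit of 𝓞_L (equivalently, x⁻¹ is an algebraic integer). -/
/-!
The matrices of `SL(2, R)` whose lower-left entry lies in an ideal `I` form a subgroup `Γ₀(I)`.
Conjugating `μ = !![1, x; 0, 1]` by `c` gives a matrix with lower-left entry `-c₁₀² x`. So if `μ`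
normally generates `Γ` and `Γ ≤ Γ₀(I)`, then `Γ ≤ Γ₀(I * (x))`; starting from `I = ⊤`, every
lower-left entry of `Γ` lies in `⋂ₖ (x)ᵏ`. In the noetherian domain `𝓞 L` this intersection is
`0` unless `(x) = ⊤` (Krull), which contradicts the existence of a non-upper-triangular element.
-/

open NumberField

open scoped MatrixGroups

namespace Matrix.SpecialLinearGroup

variable {R : Type*} [CommRing R]

def Gamma0 (I : Ideal R) : Subgroup SL(2, R) where
  carrier := {g | g 1 0 ∈ I}
  one_mem' := by simp
  mul_mem' {a b} ha hb := by
    change (a.1 * b.1) 1 0 ∈ I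
    rw [(Matrix.two_mul_expl a.1 b.1).2.2.1]
    exact I.add_mem (I.mul_mem_right _ ha) (I.mul_mem_left _ hb)
  inv_mem' {a} ha := by
    change (a⁻¹).1 1 0 ∈ I
    simpa [coe_inv, Matrix.adjugate_fin_two] using ha

@[simp]
theorem mem_Gamma0 {I : Ideal R} {g : SL(2, R)} : g ∈ Gamma0 I ↔ g 1 0 ∈ I :=
  Iff.rfl

theorem conj_upperUnitriangular_apply_one_zero (c μ : SL(2, R)) {x : R}
    (hμ : (μ : Matrix (Fin 2) (Fin 2) R) = !![1, x; 0, 1]) :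
    (c * μ * c⁻¹) 1 0 = -(c 1 0 * (c 1 0 * x)) := by
  simp [coe_inv, Matrix.adjugate_fin_two, hμ, Matrix.mul_apply, Fin.sum_univ_two]
  ring

end Matrix.SpecialLinearGroup

open Matrix.SpecialLinearGroup

theorem Subgroup.le_of_normalClosure_singleton_eq_top {G : Type*} [Group G] {Γ H : Subgroup G}
    {μ : G} (hμΓ : μ ∈ Γ) (hgen : Subgroup.normalClosure ({⟨μ, hμΓ⟩} : Set Γ) = ⊤)
    (hconj : ∀ c ∈ Γ, c * μ * c⁻¹ ∈ H) : Γ ≤ H := by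
  intro g hg
  have hle : Subgroup.normalClosure {(⟨μ, hμΓ⟩ : Γ)} ≤ H.comap Γ.subtype := by
    refine (Subgroup.closure_le _).mpr fun y hy => ?_
    obtain ⟨a, rfl, haμ⟩ := Group.mem_conjugatesOfSet_iff.mp hy
    obtain ⟨c, rfl⟩ := isConj_iff.mp haμ
    exact hconj c c.2
  exact hle (hgen ▸ Subgroup.mem_top (⟨g, hg⟩ : Γ))

theorem le_Gamma0_span_pow_of_normalClosure_eq_top {R : Type*} [CommRing R] {x : R}
    {Γ : Subgroup SL(2, R)} {μ : SL(2, R)} (hμ : (μ : Matrix (Fin 2) (Fin 2) R) = !![1, x; 0, 1])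
    (hμΓ : μ ∈ Γ) (hgen : Subgroup.normalClosure ({⟨μ, hμΓ⟩} : Set Γ) = ⊤) (k : ℕ) :
    Γ ≤ Gamma0 (Ideal.span {x} ^ k) := by
  induction k with
  | zero => exact fun g _ => by simp [Ideal.one_eq_top]
  | succ k ih =>
    refine Subgroup.le_of_normalClosure_singleton_eq_top hμΓ hgen fun c hc => ?_
    rw [mem_Gamma0, conj_upperUnitriangular_apply_one_zero c μ hμ, pow_succ]
    exact neg_mem (Ideal.mul_mem_mul (ih hc)
      (Ideal.mul_mem_left _ _ (Ideal.mem_span_singleton_self x)))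

/-- Let `L` be a number field and `x ∈ 𝓞 L`. If `Γ ≤ SL(2, 𝓞 L)` contains
`μ = !![1, x; 0, 1]`, `μ` normally generates `Γ`, and `Γ` contains a matrix with nonzero
lower-left entry, then `x` is a unit of `𝓞 L`. -/
theorem stmt_0 (L : Type*) [Field L] [NumberField L] (x : 𝓞 L)
    (Γ : Subgroup (Matrix.SpecialLinearGroup (Fin 2) (𝓞 L)))
    (μ : Matrix.SpecialLinearGroup (Fin 2) (𝓞 L))
    (hμ : (μ : Matrix (Fin 2) (Fin 2) (𝓞 L)) = !![1, x; 0, 1])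
    (hμΓ : μ ∈ Γ)
    (hgen : Subgroup.normalClosure ({⟨μ, hμΓ⟩} : Set Γ) = ⊤)
    (hc : ∃ g ∈ Γ, (g : Matrix (Fin 2) (Fin 2) (𝓞 L)) 1 0 ≠ 0) :
    IsUnit x := by
  obtain ⟨g, hg, hg10⟩ := hc
  by_contra hx
  have hspan : Ideal.span {x} ≠ ⊤ := by rwa [Ne, Ideal.span_singleton_eq_top]
  have hmem : g 1 0 ∈ ⨅ k : ℕ, Ideal.span {x} ^ k :=
    Ideal.mem_iInf.mpr fun k => le_Gamma0_span_pow_of_normalClosure_eq_top hμ hμΓ hgen k hg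
  rw [Ideal.iInf_pow_eq_bot_of_isDomain _ hspan, Ideal.mem_bot] at hmem
  exact hg10 hmem
end

section
/- Let 𝔸 be the ring of all algebraic integers, i.e., the integral closure of ℤ in ℂ. For every matrix M ∈ SL(2, 𝔸) with trace M = 2, there exists h ∈ SL(2, 𝔸) such that hMh⁻¹ is upper triangular, i.e., the lower-left entry of hMh⁻¹ is 0. -/
/-!
Over a Bézout domain `R`, a matrix `M ∈ SL(2, R)` of trace `2` satisfies `det (M - 1) = 0`, so
`M - 1` kills a nonzero vector; dividing it by the generator of the ideal spanned by its entries
gives a unimodular fixed vector of `M`, which is the first column of some `g ∈ SL(2, R)`, and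
conjugating by `g⁻¹` makes `M` upper triangular.

The algebraic integers form a Bézout domain. Given `s, r`, the ideal `(s, r)` of the ring of
integers of `K = ℚ(s, r)` has a principal power `(g)`, since the class group of `K` is finite.
In the algebraic integers `g = c ^ n` for some `c`, and `c` generates `(s, r)`: every `w` in
`(s, r)` has `c ^ n ∣ w ^ n`, hence `c ∣ w` because `w / c` is integral, so `(s, r) = (c) J`,
and cancelling `(c) ^ n` in `(s, r) ^ n = (c) ^ n` gives `J ^ n = 1`, i.e. `J = 1`.
-/

open Matrix NumberField

section Bezout

variable {R : Type*} [CommRing R]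

theorem Matrix.det_sub_one_fin_two (A : Matrix (Fin 2) (Fin 2) R) :
    (A - 1).det = A.det - A.trace + 1 := by
  simp only [det_fin_two, trace_fin_two, sub_apply, one_apply_eq, one_apply_ne, ne_eq,
    Fin.reduceEq, not_false_eq_true]
  ring

theorem Matrix.SpecialLinearGroup.exists_conj_apply_one_zero_eq_zero_of_mulVec_eq
    (M : SpecialLinearGroup (Fin 2) R) {u : Fin 2 → R} (hu : Ideal.span (Set.range u) = ⊤)
    (hMu : (M : Matrix (Fin 2) (Fin 2) R) *ᵥ u = u) :
    ∃ h : SpecialLinearGroup (Fin 2) R,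
      ((h * M * h⁻¹ : SpecialLinearGroup (Fin 2) R) : Matrix (Fin 2) (Fin 2) R) 1 0 = 0 := by
  obtain ⟨c, hc⟩ := Ideal.mem_span_range_iff_exists_fun.mp (hu ▸ Submodule.mem_top (x := 1))
  rw [Fin.sum_univ_two] at hc
  obtain ⟨h, hh⟩ : ∃ h : SpecialLinearGroup (Fin 2) R,
      (h : Matrix (Fin 2) (Fin 2) R) = !![c 0, c 1; -u 1, u 0] :=
    ⟨⟨_, by rw [det_fin_two_of]; linear_combination hc⟩, rfl⟩
  refine ⟨h, ?_⟩
  have h0 := congrFun hMu 0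
  have h1 := congrFun hMu 1
  simp only [mulVec, dotProduct, Fin.sum_univ_two] at h0 h1
  rw [SpecialLinearGroup.coe_mul, SpecialLinearGroup.coe_mul, SpecialLinearGroup.coe_inv, hh]
  simp only [adjugate_fin_two, cons_mul, empty_mul, Equiv.symm_apply_apply, vecMul, dotProduct,
    mul_apply, Fin.sum_univ_two, of_apply, cons_val', cons_val_zero, cons_val_one,
    cons_val_fin_one]
  linear_combination u 0 * h1 - u 1 * h0

variable [IsDomain R] [IsBezout R]

theorem Matrix.exists_span_range_eq_top_mulVec_eq_zero {n : Type*} [Fintype n] [DecidableEq n]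
    {A : Matrix n n R} (hA : A.det = 0) :
    ∃ u : n → R, Ideal.span (Set.range u) = ⊤ ∧ A *ᵥ u = 0 := by
  obtain ⟨v, hv, hAv⟩ := exists_mulVec_eq_zero_iff.mpr hA
  obtain ⟨g, hg⟩ := IsBezout.isPrincipal_of_FG (Ideal.span (Set.range v))
    (Submodule.fg_span (Set.finite_range v))
  rw [Ideal.submodule_span_eq] at hg
  have hdvd : ∀ i, g ∣ v i := fun i ↦
    Ideal.mem_span_singleton.mp (hg ▸ Ideal.subset_span (Set.mem_range_self i))
  choose u hu using hdvd
  have hv_eq : v = g • u := funext hu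
  have hg0 : g ≠ 0 := by
    rintro rfl
    exact hv (by simpa using hv_eq)
  refine ⟨u, ?_, ?_⟩
  · obtain ⟨c, hc⟩ := Ideal.mem_span_range_iff_exists_fun.mp
      (hg ▸ Ideal.mem_span_singleton_self g : g ∈ Ideal.span (Set.range v))
    rw [Ideal.eq_top_iff_one, Ideal.mem_span_range_iff_exists_fun]
    refine ⟨c, mul_left_cancel₀ hg0 ?_⟩
    calc g * ∑ i, c i * u i = ∑ i, c i * v i := by simp_rw [Finset.mul_sum, hu, mul_left_comm]
      _ = g * 1 := by rw [hc, mul_one]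
  · rw [hv_eq, mulVec_smul] at hAv
    exact (smul_eq_zero.mp hAv).resolve_left hg0

theorem Matrix.SpecialLinearGroup.exists_conj_apply_one_zero_eq_zero_of_trace_eq_two
    (M : SpecialLinearGroup (Fin 2) R) (hM : (M : Matrix (Fin 2) (Fin 2) R).trace = 2) :
    ∃ h : SpecialLinearGroup (Fin 2) R,
      ((h * M * h⁻¹ : SpecialLinearGroup (Fin 2) R) : Matrix (Fin 2) (Fin 2) R) 1 0 = 0 := by
  have hdet : ((M : Matrix (Fin 2) (Fin 2) R) - 1).det = 0 := by
    rw [det_sub_one_fin_two, M.det_coe, hM]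
    ring
  obtain ⟨u, hu, hMu⟩ := exists_span_range_eq_top_mulVec_eq_zero hdet
  rw [sub_mulVec, one_mulVec, sub_eq_zero] at hMu
  exact M.exists_conj_apply_one_zero_eq_zero_of_mulVec_eq hu hMu

end Bezout

theorem Ideal.isPrincipal_pow_card_classGroup {R : Type*} [CommRing R] [IsDedekindDomain R]
    [Fintype (ClassGroup R)] (I : Ideal R) : (I ^ Fintype.card (ClassGroup R)).IsPrincipal := by
  rcases eq_or_ne I ⊥ with rfl | hI
  · rw [Ideal.bot_pow Fintype.card_ne_zero]
    exact bot_isPrincipal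
  have hI' := mem_nonZeroDivisors_of_ne_zero hI
  have h1 : ClassGroup.mk0 (⟨I, hI'⟩ ^ Fintype.card (ClassGroup R)) = 1 := by
    rw [map_pow]
    exact pow_card_eq_one
  rwa [SubmonoidClass.mk_pow, ClassGroup.mk0_eq_one_iff] at h1

namespace integralClosure

variable {L : Type*} [Field L] {n : ℕ}

local notation "𝔸" => integralClosure ℤ L

theorem exists_pow_eq [IsAlgClosed L] (hn : n ≠ 0) (g : 𝔸) : ∃ c : 𝔸, c ^ n = g := by
  obtain ⟨γ, hγ⟩ := IsAlgClosed.exists_pow_nat_eq (g : L) (Nat.pos_of_ne_zero hn)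
  exact ⟨⟨γ, .of_pow (Nat.pos_of_ne_zero hn) (hγ ▸ g.2)⟩, Subtype.ext hγ⟩

theorem dvd_of_pow_dvd_pow (hn : n ≠ 0) {a b : 𝔸} (h : a ^ n ∣ b ^ n) : a ∣ b := by
  obtain ⟨u, hu⟩ := h
  rcases eq_or_ne a 0 with rfl | ha
  · simp_all [zero_pow hn]
  have ha' : (a : L) ≠ 0 := by exact_mod_cast ha
  have hquot : ((b : L) / a) ^ n = u := by
    rw [div_pow, div_eq_iff (pow_ne_zero n ha')]
    exact_mod_cast hu.trans (mul_comm _ _)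
  refine ⟨⟨(b : L) / a, .of_pow (Nat.pos_of_ne_zero hn) (hquot ▸ u.2)⟩, Subtype.ext ?_⟩
  simp [mul_div_cancel₀ _ ha']

theorem isPrincipal_of_pow_isPrincipal [IsAlgClosed L] (hn : n ≠ 0) {I : Ideal 𝔸}
    (h : (I ^ n).IsPrincipal) : I.IsPrincipal := by
  obtain ⟨g, hg⟩ := h
  rw [Ideal.submodule_span_eq] at hg
  obtain ⟨c, rfl⟩ := exists_pow_eq hn g
  rcases eq_or_ne c 0 with rfl | hc
  · rw [zero_pow hn, Ideal.span_singleton_eq_bot.mpr rfl, Ideal.pow_eq_bot hn] at hg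
    exact hg ▸ bot_isPrincipal
  set J := I.colon (Ideal.span {c})
  have hIJ : I = Ideal.span {c} * J := by
    refine (Ideal.eq_span_singleton_mul I J).mpr ⟨fun w hw ↦ ?_, fun z hz ↦ ?_⟩
    · have hdvd : c ^ n ∣ w ^ n := Ideal.mem_span_singleton.mp (hg ▸ Ideal.pow_mem_pow hw n)
      obtain ⟨v, rfl⟩ := dvd_of_pow_dvd_pow hn hdvd
      exact ⟨v, Ideal.mem_colon_span_singleton.mpr (by simpa [mul_comm] using hw), rfl⟩
    · simpa [mul_comm] using Ideal.mem_colon_span_singleton.mp hz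
  have hJ : J ^ n = ⊤ := by
    rw [hIJ, mul_pow, Ideal.span_singleton_pow] at hg
    exact (Ideal.span_singleton_mul_right_inj (pow_ne_zero n hc)).mp
      (hg.trans (Ideal.mul_top _).symm)
  rw [hIJ, (eq_top_iff.mpr (hJ ▸ Ideal.pow_le_self hn) : J = ⊤), Ideal.mul_top]
  exact ⟨c, rfl⟩

theorem exists_pow_span_pair_isPrincipal [CharZero L] (s r : 𝔸) :
    ∃ n ≠ 0, (Ideal.span {s, r} ^ n).IsPrincipal := by
  let K := IntermediateField.adjoin ℚ {(s : L), (r : L)}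
  have : FiniteDimensional ℚ K := IntermediateField.finiteDimensional_adjoin <| by
    rintro x (rfl | rfl)
    exacts [s.2.tower_top, r.2.tower_top]
  have : NumberField K := ⟨⟩
  let φ : 𝓞 K →+* 𝔸 := ((algebraMap K L).comp (algebraMap (𝓞 K) K)).codRestrict
    (integralClosure ℤ L) fun x ↦ map_isIntegral_int (algebraMap K L) x.2
  have hφ : ∀ x : 𝔸, (x : L) ∈ K → ∃ y, φ y = x := fun x hx ↦
    ⟨⟨⟨x, hx⟩, (isIntegral_algebraMap_iff (algebraMap K L).injective).mp x.2⟩, rfl⟩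
  obtain ⟨s', hs⟩ := hφ s (IntermediateField.subset_adjoin ℚ _ (by simp))
  obtain ⟨r', hr⟩ := hφ r (IntermediateField.subset_adjoin ℚ _ (by simp))
  refine ⟨Fintype.card (ClassGroup (𝓞 K)), Fintype.card_ne_zero, ?_⟩
  have := (Ideal.isPrincipal_pow_card_classGroup (Ideal.span {s', r'})).map_ringHom φ
  rwa [Ideal.map_pow, Ideal.map_span, Set.image_pair, hs, hr] at this

instance [CharZero L] [IsAlgClosed L] : IsBezout 𝔸 :=
  IsBezout.iff_span_pair_isPrincipal.mpr fun s r ↦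
    let ⟨_, hn, h⟩ := exists_pow_span_pair_isPrincipal s r
    isPrincipal_of_pow_isPrincipal hn h

end integralClosure

/-- Every `M ∈ SL(2, 𝔸)` (where `𝔸` is the ring of algebraic integers,
the integral closure of `ℤ` in `ℂ`) with trace `2` can be conjugated within `SL(2, 𝔸)`
to an upper triangular matrix. -/
theorem stmt_2 (M : Matrix.SpecialLinearGroup (Fin 2) (integralClosure ℤ ℂ))
    (hM : Matrix.trace (M : Matrix (Fin 2) (Fin 2) (integralClosure ℤ ℂ)) = 2) :
    ∃ h : Matrix.SpecialLinearGroup (Fin 2) (integralClosure ℤ ℂ),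
      ((h * M * h⁻¹ : Matrix.SpecialLinearGroup (Fin 2) (integralClosure ℤ ℂ)) :
        Matrix (Fin 2) (Fin 2) (integralClosure ℤ ℂ)) 1 0 = 0 := by
  exact Matrix.SpecialLinearGroup.exists_conj_apply_one_zero_eq_zero_of_trace_eq_two M hM
end

section
/- Let L be a number field and let β, γ ∈ 𝓞_L. Suppose Γ is a subgroup of SL(2, 𝓞_L) such that μ = [[1+βγ, −β²], [γ², 1−βγ]] belongs to Γ, Γ equals the normal closure of {μ} in Γ, and there exists g ∈ Γ such that the vector g·(β, γ)ᵀ is not an L-scalar multiple of (β, γ)ᵀ. Then the ideal of 𝓞_L generated by β and γ is all of 𝓞_L; that is, the ideals β𝓞_L and γ𝓞_L are comaximal. -/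
/-!
The matrix `μ` is the transvection `x ↦ x + (γ x₀ - β x₁) v` along `v = (β, γ)`, and write
`I = (β, γ)`. If every element of `Γ` fixes `v` modulo `I ^ k`, then for `c ∈ Γ` the vector
`w = c⁻¹ v` is congruent to `v`, so `γ w₀ - β w₁ = γ (w₀ - β) - β (w₁ - γ) ∈ I ^ (k + 1)` and
the conjugate `c μ c⁻¹` moves `v` by a multiple of that coefficient. As these conjugates generate
`Γ`, every element of `Γ` fixes `v` modulo `I ^ (k + 1)`. If `I` were proper, Krull's
intersection theorem would force `Γ` to fix `v` exactly, which the element `g` prevents.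
-/

open NumberField Matrix MatrixGroups

theorem Subgroup.le_of_conj_mem_of_normalClosure_eq_top {G : Type*} [Group G]
    {Γ H : Subgroup G} {x : G} (hx : x ∈ Γ)
    (hgen : Subgroup.normalClosure ({⟨x, hx⟩} : Set Γ) = ⊤)
    (hconj : ∀ c ∈ Γ, c * x * c⁻¹ ∈ H) : Γ ≤ H := by
  rw [← subgroupOf_eq_top, eq_top_iff, ← hgen, normalClosure, closure_le]
  rintro _ hy
  obtain ⟨_, rfl, hxy⟩ := Group.mem_conjugatesOfSet_iff.mp hy
  obtain ⟨c, rfl⟩ := isConj_iff.mp hxy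
  exact hconj c c.2

theorem Matrix.meridian_mulVec {R : Type*} [CommRing R] (β γ : R) (x : Fin 2 → R) :
    !![1 + β * γ, -β ^ 2; γ ^ 2, 1 - β * γ] *ᵥ x = x + (γ * x 0 - β * x 1) • ![β, γ] := by
  ext i
  fin_cases i <;> simp [mulVec, dotProduct, Fin.sum_univ_two] <;> ring

namespace Matrix.SpecialLinearGroup

variable {ι R : Type*} [DecidableEq ι] [Fintype ι] [CommRing R]

def congruenceStabilizer (J : Ideal R) (v : ι → R) : Subgroup (SpecialLinearGroup ι R) :=
  (MulAction.stabilizer (SpecialLinearGroup ι (R ⧸ J)) (Ideal.Quotient.mk J ∘ v)).comap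
    (map (Ideal.Quotient.mk J))

theorem mem_congruenceStabilizer {J : Ideal R} {v : ι → R} {g : SpecialLinearGroup ι R} :
    g ∈ congruenceStabilizer J v ↔ ∀ i, (↑g *ᵥ v) i - v i ∈ J := by
  simp only [congruenceStabilizer, Subgroup.mem_comap, MulAction.mem_stabilizer_iff,
    SpecialLinearGroup.smul_def, map_apply_coe, smul_eq_mulVec, funext_iff,
    Function.comp_apply, RingHom.mapMatrix_apply, ← RingHom.map_mulVec, Ideal.Quotient.eq]

variable {β γ : R} {Γ : Subgroup SL(2, R)} {μ : SL(2, R)}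

theorem conj_mem_congruenceStabilizer_span_mul
    (hμ : (μ : Matrix (Fin 2) (Fin 2) R) = !![1 + β * γ, -β ^ 2; γ ^ 2, 1 - β * γ])
    {J : Ideal R} {c : SL(2, R)} (hc : c⁻¹ ∈ congruenceStabilizer J ![β, γ]) :
    c * μ * c⁻¹ ∈ congruenceStabilizer (Ideal.span {β, γ} * J) ![β, γ] := by
  rw [mem_congruenceStabilizer] at hc ⊢
  set w := (↑c⁻¹ : Matrix (Fin 2) (Fin 2) R) *ᵥ ![β, γ]
  have hcw : (c : Matrix (Fin 2) (Fin 2) R) *ᵥ w = ![β, γ] := by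
    rw [mulVec_mulVec, ← coe_mul, mul_inv_cancel, coe_one, one_mulVec]
  have ht : γ * w 0 - β * w 1 ∈ Ideal.span {β, γ} * J := by
    have hβ : β ∈ Ideal.span {β, γ} := Ideal.subset_span (by simp)
    have hγ : γ ∈ Ideal.span {β, γ} := Ideal.subset_span (by simp)
    rw [show γ * w 0 - β * w 1 = γ * (w 0 - ![β, γ] 0) - β * (w 1 - ![β, γ] 1) by
      simp only [cons_val_zero, cons_val_one]; ring]
    exact Ideal.sub_mem _ (Ideal.mul_mem_mul hγ (hc 0)) (Ideal.mul_mem_mul hβ (hc 1))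
  have hconj : (↑(c * μ * c⁻¹) : Matrix (Fin 2) (Fin 2) R) *ᵥ ![β, γ]
      = ![β, γ] + (γ * w 0 - β * w 1) • ((c : Matrix (Fin 2) (Fin 2) R) *ᵥ ![β, γ]) := by
    rw [coe_mul, coe_mul, ← mulVec_mulVec, ← mulVec_mulVec, hμ, meridian_mulVec, mulVec_add,
      mulVec_smul, hcw]
  intro i
  rw [hconj, Pi.add_apply, add_sub_cancel_left, Pi.smul_apply, smul_eq_mul]
  exact Ideal.mul_mem_right _ _ ht

theorem le_congruenceStabilizer_span_pow
    (hμ : (μ : Matrix (Fin 2) (Fin 2) R) = !![1 + β * γ, -β ^ 2; γ ^ 2, 1 - β * γ])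
    (hμΓ : μ ∈ Γ) (hgen : Subgroup.normalClosure ({⟨μ, hμΓ⟩} : Set Γ) = ⊤) (k : ℕ) :
    Γ ≤ congruenceStabilizer (Ideal.span {β, γ} ^ k) ![β, γ] := by
  induction k with
  | zero => exact fun g _ ↦ mem_congruenceStabilizer.mpr fun i ↦ by simp
  | succ k ih =>
    refine Subgroup.le_of_conj_mem_of_normalClosure_eq_top hμΓ hgen fun c hc ↦ ?_
    rw [pow_succ']
    exact conj_mem_congruenceStabilizer_span_mul hμ (ih (Γ.inv_mem hc))

theorem mulVec_eq_of_span_ne_top [IsNoetherianRing R] [IsDomain R]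
    (hμ : (μ : Matrix (Fin 2) (Fin 2) R) = !![1 + β * γ, -β ^ 2; γ ^ 2, 1 - β * γ])
    (hμΓ : μ ∈ Γ) (hgen : Subgroup.normalClosure ({⟨μ, hμΓ⟩} : Set Γ) = ⊤)
    (hI : Ideal.span {β, γ} ≠ ⊤) {g : SL(2, R)} (hg : g ∈ Γ) :
    (g : Matrix (Fin 2) (Fin 2) R) *ᵥ ![β, γ] = ![β, γ] := by
  ext i
  rw [← sub_eq_zero, ← Ideal.mem_bot, ← Ideal.iInf_pow_eq_bot_of_isDomain _ hI, Ideal.mem_iInf]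
  exact fun k ↦ mem_congruenceStabilizer.mp (le_congruenceStabilizer_span_pow hμ hμΓ hgen k hg) i

end Matrix.SpecialLinearGroup

/-- Let `L` be a number field, `β γ ∈ 𝓞 L`, and `Γ ≤ SL(2, 𝓞 L)` be
normally generated by `μ = !![1 + βγ, -β²; γ², 1 - βγ]`. If some `g ∈ Γ` moves the vector
`(β, γ)ᵀ` off its `L`-line, then the ideal generated by `β` and `γ` is all of `𝓞 L`. -/
theorem stmt_3 (L : Type*) [Field L] [NumberField L] (β γ : 𝓞 L)
    (Γ : Subgroup (Matrix.SpecialLinearGroup (Fin 2) (𝓞 L)))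
    (μ : Matrix.SpecialLinearGroup (Fin 2) (𝓞 L))
    (hμ : (μ : Matrix (Fin 2) (Fin 2) (𝓞 L)) = !![1 + β * γ, -β ^ 2; γ ^ 2, 1 - β * γ])
    (hμΓ : μ ∈ Γ)
    (hgen : Subgroup.normalClosure ({⟨μ, hμΓ⟩} : Set Γ) = ⊤)
    (hg : ∃ g ∈ Γ, ¬ ∃ c : L,
      (((g : Matrix (Fin 2) (Fin 2) (𝓞 L)).map (algebraMap (𝓞 L) L)).mulVec
          ![(β : L), (γ : L)]) = c • ![(β : L), (γ : L)]) :
    Ideal.span ({β, γ} : Set (𝓞 L)) = ⊤ := by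
  by_contra hI
  obtain ⟨g, hgΓ, hmoves⟩ := hg
  refine hmoves ⟨1, ?_⟩
  have hv : ![(β : L), (γ : L)] = algebraMap (𝓞 L) L ∘ ![β, γ] := by
    ext i; fin_cases i <;> rfl
  ext i
  rw [one_smul, hv, ← RingHom.map_mulVec,
    Matrix.SpecialLinearGroup.mulVec_eq_of_span_ne_top hμ hμΓ hgen hI hgΓ]
  rfl
end

section
/- Let R be a commutative ring and let α, r, s, p, q ∈ R satisfy pr + qs = 1. Set β = rα, γ = sα, μ = [[1+βγ, −β²], [γ², 1−βγ]], and h = [[p, q], [−s, r]]. Then det h = 1, det μ = 1, and h μ h⁻¹ = [[1, −α²], [0, 1]]. -/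
/-!
The parabolic `μ` is the transvection `1 + α² · (r, s)ᵀ (s, -r)`: a rank-one perturbation of the
identity by `u vᵀ` with `v ⬝ u = 0`, so its determinant is `1 + v ⬝ u = 1`. Conjugating by `h`
replaces `u` by `h u` and `vᵀ` by `vᵀ h⁻¹`, and `pr + qs = 1` says exactly that `h (r, s)ᵀ = e₁`
and `(s, -r) h⁻¹ = -e₂ᵀ`.
-/

open Matrix

namespace Matrix

variable {n R : Type*} [Fintype n] [DecidableEq n] [CommRing R]

theorem det_one_add_vecMulVec (u v : n → R) : det (1 + vecMulVec u v) = 1 + v ⬝ᵥ u := by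
  rw [vecMulVec_eq Unit, det_one_add_replicateCol_mul_replicateRow]

theorem mul_one_add_vecMulVec_mul {h g : Matrix n n R} (hg : h * g = 1) (u v : n → R) :
    h * (1 + vecMulVec u v) * g = 1 + vecMulVec (h *ᵥ u) (v ᵥ* g) := by
  rw [Matrix.mul_add, Matrix.mul_one, Matrix.add_mul, hg, mul_vecMulVec, vecMulVec_mul]

end Matrix

section Parabolic

variable {R : Type*} [CommRing R]

theorem parabolic_eq_one_add_vecMulVec (β γ : R) :
    !![1 + β * γ, -β ^ 2; γ ^ 2, 1 - β * γ] = 1 + vecMulVec ![β, γ] ![γ, -β] := by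
  ext i j
  fin_cases i <;> fin_cases j <;> simp <;> ring

theorem det_parabolic (β γ : R) : det !![1 + β * γ, -β ^ 2; γ ^ 2, 1 - β * γ] = 1 := by
  rw [parabolic_eq_one_add_vecMulVec, det_one_add_vecMulVec]
  simp [mul_comm]

end Parabolic

/-- Over a commutative ring `R`, if `p * r + q * s = 1`, `β = r * α`,
`γ = s * α`, `μ = !![1 + βγ, -β²; γ², 1 - βγ]` and `h = !![p, q; -s, r]`, then
`det h = 1`, `det μ = 1`, and `h * μ * h⁻¹ = !![1, -α²; 0, 1]`. -/
theorem stmt_5 (R : Type*) [CommRing R] (α r s p q : R) (hpq : p * r + q * s = 1)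
    (β γ : R) (hβ : β = r * α) (hγ : γ = s * α)
    (μ h : Matrix (Fin 2) (Fin 2) R)
    (hμ : μ = !![1 + β * γ, -β ^ 2; γ ^ 2, 1 - β * γ])
    (hh : h = !![p, q; -s, r]) :
    h.det = 1 ∧ μ.det = 1 ∧ h * μ * h⁻¹ = !![1, -α ^ 2; 0, 1] := by
  subst hμ hh hβ hγ
  have hdet : det !![p, q; -s, r] = 1 := by
    rw [det_fin_two_of]; linear_combination hpq
  have hinv : !![p, q; -s, r] * !![r, -q; s, p] = 1 := by
    simpa [hdet, adjugate_fin_two_of] using mul_adjugate !![p, q; -s, r]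
  have hu : !![p, q; -s, r] *ᵥ ![r * α, s * α] = ![α, 0] := by
    ext i; fin_cases i
    · simp; linear_combination α * hpq
    · simp; ring
  have hv : ![s * α, -(r * α)] ᵥ* !![r, -q; s, p] = ![0, -α] := by
    ext i; fin_cases i
    · simp; ring
    · simp; linear_combination (-α) * hpq
  refine ⟨hdet, det_parabolic _ _, ?_⟩
  rw [inv_eq_right_inv hinv, parabolic_eq_one_add_vecMulVec, mul_one_add_vecMulVec_mul hinv,
    hu, hv]
  ext i j; fin_cases i <;> fin_cases j <;> simp [sq]
end

section
/- Let G be a group, R ⊆ G a subset, K a subgroup of G, and μ ∈ G an element lying both in the subgroup generated by R and in K. Suppose K equals the normal closure of {μ} in K, and suppose G is generated by R ∪ K. Then the normal closure of R in G equals G; equivalently, the quotient of G by the normal closure of R is the trivial group. -/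
namespace Subgroup

variable {G : Type*} [Group G]

theorem le_of_normalClosure_eq_top_of_subset {K N : Subgroup G} [N.Normal] {s : Set K}
    (hs : normalClosure s = ⊤) (hsN : s ⊆ N.subgroupOf K) : K ≤ N := by
  have hKN : N.subgroupOf K = ⊤ := top_le_iff.1 (hs ▸ normalClosure_le_normal hsN)
  exact subgroupOf_eq_top.1 hKN

end Subgroup

/-- If `μ` lies in the subgroup generated by `R` and in a subgroup `K`
which it normally generates, and `G` is generated by `R ∪ K`, then the normal closure of
`R` in `G` is all of `G`. -/
theorem stmt_6 (G : Type*) [Group G] (R : Set G) (K : Subgroup G) (μ : G)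
    (hμR : μ ∈ Subgroup.closure R) (hμK : μ ∈ K)
    (hKgen : Subgroup.normalClosure ({⟨μ, hμK⟩} : Set K) = ⊤)
    (hG : Subgroup.closure (R ∪ (K : Set G)) = ⊤) :
    Subgroup.normalClosure R = ⊤ := by
  have hRN : R ⊆ Subgroup.normalClosure R := Subgroup.subset_normalClosure
  have hμN : μ ∈ Subgroup.normalClosure R := (Subgroup.closure_le _).2 hRN hμR
  have hKN : K ≤ Subgroup.normalClosure R :=
    Subgroup.le_of_normalClosure_eq_top_of_subset hKgen (Set.singleton_subset_iff.2 hμN)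
  rw [eq_top_iff, ← hG]
  exact (Subgroup.closure_le _).2 (Set.union_subset hRN hKN)
end

section
/- Let ℓ = e^{iπ/6} ∈ ℂ, and let t and r denote the images in PSL(2, ℂ) of the matrices [[1, 1], [0, 1]] and [[ℓ, 0], [0, ℓ⁻¹]] respectively. Then the abelianization of the subgroup of PSL(2, ℂ) generated by t and r is isomorphic to ℤ/6ℤ. -/
/-!
Since `ℓ ^ 2` is a primitive sixth root of unity, `ℓ ^ 2 - ℓ ^ 4 = 1`, and a direct
computation gives `t = ⁅r, t⁆ * ⁅r ^ 2, t⁆⁻¹`; moreover `r ^ 6 = 1` in `PSL(2, ℂ)`. Hence the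
abelianization is cyclic, generated by the class of `r`, of order dividing `6`. Every element
of `⟨t, r⟩` is upper triangular, and the character `!![a, b; 0, a⁻¹] ↦ a ^ 2` (well defined on
`PSL`) sends `r` to `ℓ ^ 2`, which has order exactly `6`.
-/

open scoped MatrixGroups commutatorElement

theorem orderOf_eq_of_pow_eq_one_of_orderOf_map {G H : Type*} [Monoid G] [Monoid H]
    (f : G →* H) {x : G} {n : ℕ} (hx : x ^ n = 1) (hfx : orderOf (f x) = n) :
    orderOf x = n :=
  Nat.dvd_antisymm (orderOf_dvd_of_pow_eq_one hx) (hfx ▸ orderOf_map_dvd f x)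

namespace Abelianization

open Subgroup

variable {G : Type*} [Group G]

theorem forall_mem_zpowers_of_closure_eq_top {s : Set G} (hs : closure s = ⊤)
    {x : Abelianization G} (hx : ∀ a ∈ s, of a ∈ zpowers x) (y : Abelianization G) :
    y ∈ zpowers x := by
  induction y using QuotientGroup.induction_on with
  | H g => exact (closure_le (zpowers x |>.comap of)).2 hx (hs ▸ mem_top g)

theorem nonempty_mulEquiv_zmod_of_closure_pair {M : Type*} [CommGroup M] {a b : G} {n : ℕ}
    (hab : a = ⁅b, a⁆ * ⁅b ^ 2, a⁆⁻¹) (hb : b ^ n = 1)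
    (χ : closure ({a, b} : Set G) →* M)
    (hχ : orderOf (χ ⟨b, subset_closure (by simp)⟩) = n) :
    Nonempty (Abelianization (closure ({a, b} : Set G)) ≃* Multiplicative (ZMod n)) := by
  set a' : closure ({a, b} : Set G) := ⟨a, subset_closure (by simp)⟩
  set b' : closure ({a, b} : Set G) := ⟨b, subset_closure (by simp)⟩
  have ha' : of a' = 1 := by
    have hab' : a' = ⁅b', a'⁆ * ⁅b' ^ 2, a'⁆⁻¹ := Subtype.ext hab
    rw [hab', map_mul, map_inv, map_commutatorElement, map_commutatorElement,
      commutatorElement_eq_one_iff_mul_comm.2 (mul_comm _ _),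
      commutatorElement_eq_one_iff_mul_comm.2 (mul_comm _ _), inv_one, mul_one]
  have hgen : ∀ y, y ∈ zpowers (of b') := by
    refine forall_mem_zpowers_of_closure_eq_top closure_closure_coe_preimage ?_
    rintro c (hc | hc)
    · rw [show c = a' from Subtype.ext hc, ha']
      exact one_mem _
    · rw [show c = b' from Subtype.ext hc]
      exact mem_zpowers _
  have horder : orderOf (of b') = n :=
    orderOf_eq_of_pow_eq_one_of_orderOf_map (lift χ)
      (by rw [← map_pow, show b' ^ n = 1 from Subtype.ext hb, map_one]) (by rwa [lift_apply_of])
  exact ⟨(zmodMulEquivOfGenerator hgen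
    (by rw [← orderOf_eq_card_of_forall_mem_zpowers hgen, horder])).symm⟩

end Abelianization

theorem IsPrimitiveRoot.sq_sub_self_add_one_eq_zero {R : Type*} [CommRing R] [IsDomain R] {ζ : R}
    (h : IsPrimitiveRoot ζ 6) : ζ ^ 2 - ζ + 1 = 0 := by
  simpa [Polynomial.cyclotomic_six] using h.isRoot_cyclotomic (by norm_num)

namespace Matrix.SpecialLinearGroup

variable (K : Type*) [CommRing K]

def upperTriangular : Subgroup SL(2, K) where
  carrier := {u | (u : Matrix (Fin 2) (Fin 2) K) 1 0 = 0}
  one_mem' := by simp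
  mul_mem' {u v} hu hv := by
    simp only [Set.mem_ofPred_eq, coe_mul, mul_apply, Fin.sum_univ_two] at *
    rw [hu, hv, zero_mul, mul_zero, add_zero]
  inv_mem' {u} hu := by
    simp only [Set.mem_ofPred_eq, coe_inv, adjugate_fin_two] at *
    simp [hu]

variable {K}

theorem mem_upperTriangular {u : SL(2, K)} :
    u ∈ upperTriangular K ↔ (u : Matrix (Fin 2) (Fin 2) K) 1 0 = 0 := Iff.rfl

theorem isUnit_apply_zero_zero_of_mem_upperTriangular {u : SL(2, K)}
    (hu : u ∈ upperTriangular K) : IsUnit ((u : Matrix (Fin 2) (Fin 2) K) 0 0) := by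
  have hdet := u.2
  rw [det_fin_two, mem_upperTriangular.1 hu, mul_zero, sub_zero] at hdet
  exact IsUnit.of_mul_eq_one _ hdet

theorem apply_zero_zero_mul_of_mem_upperTriangular {u v : SL(2, K)}
    (hv : v ∈ upperTriangular K) :
    ((u * v : SL(2, K)) : Matrix (Fin 2) (Fin 2) K) 0 0 =
      (u : Matrix (Fin 2) (Fin 2) K) 0 0 * (v : Matrix (Fin 2) (Fin 2) K) 0 0 := by
  rw [coe_mul, mul_apply, Fin.sum_univ_two, mem_upperTriangular.1 hv, mul_zero, add_zero]

section Field

variable {K : Type*} [Field K]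

theorem pow_mem_center_of_pow_eq_neg_one {R : SL(2, K)} {ℓ : K}
    (hR : (R : Matrix (Fin 2) (Fin 2) K) = !![ℓ, 0; 0, ℓ⁻¹]) {n : ℕ} (hℓ : ℓ ^ n = -1) :
    R ^ n ∈ Subgroup.center SL(2, K) := by
  refine mem_center_iff.2 ⟨-1, by simp, ?_⟩
  rw [coe_pow, hR, ← diagonal_vec2, diagonal_pow, scalar_apply]
  congr
  ext i
  fin_cases i <;> simp [inv_pow, hℓ]

/-- Conjugation by `R ^ k` scales the upper right entry by `ℓ ^ (2 * k)`, so `⁅R ^ k, T⁆` is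
unipotent with upper right entry `ℓ ^ (2 * k) - 1`. -/
theorem eq_commutator_mul_inv_commutator {T R : SL(2, K)} {ℓ : K}
    (hT : (T : Matrix (Fin 2) (Fin 2) K) = !![1, 1; 0, 1])
    (hR : (R : Matrix (Fin 2) (Fin 2) K) = !![ℓ, 0; 0, ℓ⁻¹]) (hℓ : ℓ ^ 2 - ℓ ^ 4 = 1) :
    T = ⁅R, T⁆ * ⁅R ^ 2, T⁆⁻¹ := by
  have hℓ₀ : ℓ ≠ 0 := by rintro rfl; norm_num at hℓ
  ext i j
  simp only [commutatorElement_def, coe_mul, coe_inv, hT, hR, adjugate_fin_two, pow_two,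
    mul_fin_two]
  fin_cases i <;> fin_cases j <;> simp [field]
  linear_combination -hℓ

end Field

end Matrix.SpecialLinearGroup

namespace PSL2

open Matrix Matrix.SpecialLinearGroup

variable {K : Type*} [CommRing K]

theorem apply_zero_zero_sq_eq_of_inv_mul_mem_center {u v : SL(2, K)}
    (h : u⁻¹ * v ∈ Subgroup.center SL(2, K)) :
    (u : Matrix (Fin 2) (Fin 2) K) 0 0 ^ 2 = (v : Matrix (Fin 2) (Fin 2) K) 0 0 ^ 2 := by
  obtain ⟨ω, hω, hscalar⟩ := Matrix.SpecialLinearGroup.mem_center_iff.1 h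
  have hv : (v : Matrix (Fin 2) (Fin 2) K) 0 0 = (u : Matrix (Fin 2) (Fin 2) K) 0 0 * ω := by
    rw [show v = u * (u⁻¹ * v) by group, coe_mul, ← hscalar]
    simp
  rw [hv, mul_pow, show ω ^ 2 = 1 by simpa using hω, mul_one]

def topLeftSq (g : PSL(2, K)) : K :=
  Quotient.liftOn' g (fun u : SL(2, K) => (u : Matrix (Fin 2) (Fin 2) K) 0 0 ^ 2)
    fun _ _ h => apply_zero_zero_sq_eq_of_inv_mul_mem_center (QuotientGroup.leftRel_apply.1 h)

theorem topLeftSq_mk (u : SL(2, K)) :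
    topLeftSq (QuotientGroup.mk u : PSL(2, K)) = (u : Matrix (Fin 2) (Fin 2) K) 0 0 ^ 2 := rfl

variable (K) in
def upperTriangular : Subgroup PSL(2, K) :=
  (SpecialLinearGroup.upperTriangular K).map (QuotientGroup.mk' _)

theorem isUnit_topLeftSq {g : PSL(2, K)} (hg : g ∈ upperTriangular K) :
    IsUnit (topLeftSq g) := by
  obtain ⟨u, hu, rfl⟩ := hg
  exact (isUnit_apply_zero_zero_of_mem_upperTriangular hu).pow 2

theorem topLeftSq_mul {g h : PSL(2, K)} (hh : h ∈ upperTriangular K) :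
    topLeftSq (g * h) = topLeftSq g * topLeftSq h := by
  obtain ⟨v, hv, rfl⟩ := hh
  induction g using QuotientGroup.induction_on with
  | H u =>
    rw [QuotientGroup.mk'_apply, ← QuotientGroup.mk_mul, topLeftSq_mk, topLeftSq_mk, topLeftSq_mk,
      apply_zero_zero_mul_of_mem_upperTriangular hv, mul_pow]

variable (K) in
/-- The class of `!![a, b; 0, a⁻¹]` acts on `K` by the Möbius map `z ↦ a ^ 2 * z + a * b`;
this character is its linear part. -/
noncomputable def topLeftSqHom : upperTriangular K →* Kˣ where
  toFun g := (isUnit_topLeftSq g.2).unit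
  map_one' := Units.ext (by simp [← QuotientGroup.mk_one, topLeftSq_mk])
  map_mul' g h := Units.ext (topLeftSq_mul h.2)

theorem coe_topLeftSqHom (g : upperTriangular K) :
    (topLeftSqHom K g : K) = topLeftSq (g : PSL(2, K)) := rfl

end PSL2

/-- For `ℓ = e^{iπ/6}`, the subgroup of `PSL(2, ℂ)` generated by the
images of `!![1, 1; 0, 1]` and `!![ℓ, 0; 0, ℓ⁻¹]` has abelianization `ℤ/6ℤ`. -/
theorem stmt_8 (ℓ : ℂ) (hℓ : ℓ = Complex.exp (Complex.I * Real.pi / 6))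
    (T R : SL(2, ℂ))
    (hT : (T : Matrix (Fin 2) (Fin 2) ℂ) = !![1, 1; 0, 1])
    (hR : (R : Matrix (Fin 2) (Fin 2) ℂ) = !![ℓ, 0; 0, ℓ⁻¹])
    (t r : PSL(2, ℂ))
    (ht : t = (QuotientGroup.mk T : PSL(2, ℂ)))
    (hr : r = (QuotientGroup.mk R : PSL(2, ℂ))) :
    Nonempty (Abelianization (Subgroup.closure ({t, r} : Set PSL(2, ℂ))) ≃*
      Multiplicative (ZMod 6)) := by
  have hζ : IsPrimitiveRoot (ℓ ^ 2) 6 := by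
    convert Complex.isPrimitiveRoot_exp 6 (by norm_num) using 1
    rw [hℓ, ← Complex.exp_nat_mul]
    congr 1
    push_cast
    ring
  have hℓ6 : ℓ ^ 6 = -1 := by
    rw [show ℓ ^ 6 = (ℓ ^ 2) ^ 3 by ring]
    exact (hζ.pow_of_dvd (by norm_num) (by norm_num : 3 ∣ 6)).eq_neg_one_of_two_right
  have hTR := Matrix.SpecialLinearGroup.eq_commutator_mul_inv_commutator hT hR
    (by linear_combination -hζ.sq_sub_self_add_one_eq_zero)
  have hGP : Subgroup.closure ({t, r} : Set PSL(2, ℂ)) ≤ PSL2.upperTriangular ℂ := by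
    rw [Subgroup.closure_le]
    rintro g (rfl | rfl)
    · exact ⟨T, by simp [Matrix.SpecialLinearGroup.mem_upperTriangular, hT], ht.symm⟩
    · exact ⟨R, by simp [Matrix.SpecialLinearGroup.mem_upperTriangular, hR], hr.symm⟩
  refine Abelianization.nonempty_mulEquiv_zmod_of_closure_pair ?_ ?_
    ((PSL2.topLeftSqHom ℂ).comp (Subgroup.inclusion hGP)) ?_
  · rw [ht, hr]
    refine (congrArg (QuotientGroup.mk' _) hTR).trans ?_
    rw [map_mul, map_inv, map_commutatorElement, map_commutatorElement, map_pow]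
    rfl
  · rw [hr, ← QuotientGroup.mk_pow, QuotientGroup.eq_one_iff]
    exact Matrix.SpecialLinearGroup.pow_mem_center_of_pow_eq_neg_one hR hℓ6
  · rw [← orderOf_units, MonoidHom.comp_apply, PSL2.coe_topLeftSqHom]
    simp [hr, PSL2.topLeftSq_mk, hR, hζ.eq_orderOf]
end

section
/- Let ℓ = e^{2πi/3} ∈ ℂ, and let t and r denote the images in PSL(2, ℂ) of the matrices [[1, 1], [0, 1]] and [[ℓ, 0], [0, ℓ⁻¹]] respectively. Then the abelianization of the subgroup of PSL(2, ℂ) generated by t and r is isomorphic to ℤ/3ℤ × ℤ/3ℤ. -/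
/-!
The subgroup `⟨t, r⟩` is a faithful image of the wallpaper group `p3 = ℤ[ℓ] ⋊ ℤ/3`: the Eisenstein
integer `β` acts as the translation `!![1, β; 0, 1]` and the generator of `ℤ/3` as `r`, which
conjugates the translation by `β` into the translation by `ℓ²β`. The representation is faithful
because the central elements of `SL(2, ℂ)` are scalar. In `p3` the commutator of the rotation with
the translation by `β` is the translation by `(ℓ² - 1)β`, and these fill out exactly the index-3
sublattice `{a + bℓ : 3 ∣ a + b}`, so the abelianization is `ℤ[ℓ]/(ℓ² - 1) × ℤ/3 ≅ ℤ/3 × ℤ/3`.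
-/

open scoped MatrixGroups
open Multiplicative

def zmodPowHom {M : Type*} [Monoid M] (n : ℕ) [NeZero n] (g : M) (hg : g ^ n = 1) :
    Multiplicative (ZMod n) →* M where
  toFun c := g ^ c.toAdd.val
  map_one' := by simp
  map_mul' a b := by simp only [toAdd_mul, ZMod.val_add, ← pow_eq_pow_mod _ hg, pow_add]

theorem zmodPowHom_apply {M : Type*} [Monoid M] (n : ℕ) [NeZero n] (g : M) (hg : g ^ n = 1)
    (c : Multiplicative (ZMod n)) : zmodPowHom n g hg c = g ^ c.toAdd.val := rfl

theorem MonoidHom.map_pow_apply_of_map_apply {N H : Type*} [Group N] [Group H] (f : N →* H)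
    {a : MulAut N} {h : H} (hf : ∀ x, f (a x) = h * f x * h⁻¹) (k : ℕ) (x : N) :
    f ((a ^ k) x) = h ^ k * f x * (h ^ k)⁻¹ := by
  induction k with
  | zero => simp
  | succ k ih => rw [pow_succ', MulAut.mul_apply, hf, ih, pow_succ']; group

namespace SemidirectProduct

open scoped commutatorElement

theorem commutatorElement_inr_inl {N G : Type*} [Group N] [Group G]
    {φ : G →* MulAut N} (g : G) (n : N) :
    ⁅(inr g : N ⋊[φ] G), (inl n : N ⋊[φ] G)⁆ = inl (φ g n * n⁻¹) := by
  rw [commutatorElement_def, ← map_inv, ← inl_aut, ← map_inv, ← map_mul]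

end SemidirectProduct

theorem IsPrimitiveRoot.sq_add_self_add_one {R : Type*} [CommRing R] [IsDomain R] {ζ : R}
    (hζ : IsPrimitiveRoot ζ 3) : ζ ^ 2 + ζ + 1 = 0 := by
  have h := hζ.geom_sum_eq_zero (by norm_num)
  simp only [Finset.sum_range_succ, Finset.sum_range_zero] at h
  linear_combination h

theorem IsPrimitiveRoot.im_ne_zero_of_three {ζ : ℂ} (hζ : IsPrimitiveRoot ζ 3) : ζ.im ≠ 0 := by
  intro h
  have hre := congrArg Complex.re hζ.sq_add_self_add_one
  simp only [sq, Complex.add_re, Complex.mul_re, h, mul_zero, sub_zero, Complex.one_re,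
    Complex.zero_re] at hre
  nlinarith [sq_nonneg (ζ.re + 1 / 2)]

namespace Matrix.SpecialLinearGroup

variable {R : Type*} [CommRing R]

def unipotentHom : Multiplicative R →* SL(2, R) where
  toFun x := ⟨!![1, x.toAdd; 0, 1], by simp [det_fin_two_of]⟩
  map_one' := Subtype.ext <| by simp [one_fin_two]
  map_mul' a b := Subtype.ext <| by
    change _ = !![1, a.toAdd; 0, 1] * !![1, b.toAdd; 0, 1]
    simp [add_comm]

@[simp]
theorem coe_unipotentHom (x : Multiplicative R) :
    (unipotentHom x : Matrix (Fin 2) (Fin 2) R) = !![1, x.toAdd; 0, 1] := rfl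

def diagHom : Rˣ →* SL(2, R) where
  toFun a := ⟨!![(a : R), 0; 0, ((a⁻¹ : Rˣ) : R)], by simp [det_fin_two_of]⟩
  map_one' := Subtype.ext <| by simp [one_fin_two]
  map_mul' a b := Subtype.ext <| by
    change _ = !![(a : R), 0; 0, ((a⁻¹ : Rˣ) : R)] * !![(b : R), 0; 0, ((b⁻¹ : Rˣ) : R)]
    simp [mul_comm]

@[simp]
theorem coe_diagHom (a : Rˣ) :
    (diagHom a : Matrix (Fin 2) (Fin 2) R) = !![(a : R), 0; 0, ((a⁻¹ : Rˣ) : R)] := rfl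

theorem diagHom_mul_unipotentHom_mul_inv (a : Rˣ) (x : R) :
    diagHom a * unipotentHom (ofAdd x) * (diagHom a)⁻¹ =
      unipotentHom (ofAdd ((a : R) ^ 2 * x)) :=
  Subtype.ext <| by simp [coe_mul, coe_inv, adjugate_fin_two]; ring

theorem eq_zero_of_unipotentHom_mul_diagHom_mem_center {K : Type*} [Field K] (x : K) (a : Kˣ)
    (h : unipotentHom (ofAdd x) * diagHom a ∈ Subgroup.center SL(2, K)) :
    x = 0 ∧ a ^ 2 = 1 := by
  have hs := scalar_eq_self_of_mem_center h 0
  have hx : x = 0 := by simpa [coe_mul] using (congrFun₂ hs 0 1).symm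
  have ha : (a : K) = (a : K)⁻¹ := by simpa [coe_mul] using congrFun₂ hs 1 1
  refine ⟨hx, Units.ext ?_⟩
  rw [Units.val_pow_eq_pow_val, sq, Units.val_one]
  nth_rewrite 2 [ha]
  exact mul_inv_cancel₀ a.ne_zero

end Matrix.SpecialLinearGroup

namespace WallpaperP3

-- `(a, b)` stands for `a + b ζ` in the Eisenstein lattice, and `rot` is multiplication by `ζ²`.
def rot : ℤ × ℤ ≃+ ℤ × ℤ where
  toFun v := (v.2 - v.1, -v.1)
  invFun v := (-v.2, v.1 - v.2)
  left_inv v := by ext <;> simp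
  right_inv v := by ext <;> simp
  map_add' v w := by ext <;> simp <;> ring

theorem rot_pow_three : (rot.toMultiplicative : MulAut (Multiplicative (ℤ × ℤ))) ^ 3 = 1 := by
  ext v <;> simp [pow_succ, rot]
  ring

def rotAction : Multiplicative (ZMod 3) →* MulAut (Multiplicative (ℤ × ℤ)) :=
  zmodPowHom 3 rot.toMultiplicative rot_pow_three

end WallpaperP3

open WallpaperP3 in
abbrev WallpaperP3 : Type := Multiplicative (ℤ × ℤ) ⋊[rotAction] Multiplicative (ZMod 3)

namespace WallpaperP3

open SemidirectProduct
open scoped commutatorElement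

theorem rotAction_ofAdd_one (v : ℤ × ℤ) :
    rotAction (ofAdd 1) (ofAdd v) = ofAdd (rot v) := rfl

theorem closure_inl_inr_eq_top :
    Subgroup.closure {(inl (ofAdd (1, 0)) : WallpaperP3), inr (ofAdd 1)} = ⊤ := by
  set H := Subgroup.closure {(inl (ofAdd (1, 0)) : WallpaperP3), inr (ofAdd 1)}
  have hx : (inl (ofAdd (1, 0)) : WallpaperP3) ∈ H := Subgroup.subset_closure (by simp)
  have hz : (inr (ofAdd 1) : WallpaperP3) ∈ H := Subgroup.subset_closure (by simp)
  have hy : (inl (ofAdd (0, 1)) : WallpaperP3) ∈ H := by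
    have hconj : (inl (ofAdd (0, 1)) : WallpaperP3) =
        inr (ofAdd 1) ^ 2 * inl (ofAdd (1, 0)) * (inr (ofAdd 1) ^ 2)⁻¹ := by
      rw [← map_pow, ← map_inv, ← inl_aut]; rfl
    rw [hconj]
    exact mul_mem (mul_mem (pow_mem hz _) hx) (inv_mem (pow_mem hz _))
  rw [eq_top_iff]
  rintro ⟨v, c⟩ -
  have hv : (inl v : WallpaperP3) =
      inl (ofAdd (1, 0)) ^ v.toAdd.1 * inl (ofAdd (0, 1)) ^ v.toAdd.2 := by
    rw [← map_zpow inl, ← map_zpow inl, ← map_mul]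
    congr 1
    ext <;> simp
  have hc : (inr c : WallpaperP3) = inr (ofAdd 1) ^ c.toAdd.val := by
    rw [← map_pow, ← ofAdd_nsmul, nsmul_one, ZMod.natCast_zmod_val, ofAdd_toAdd]
  rw [mk_eq_inl_mul_inr, hv, hc]
  exact mul_mem (mul_mem (zpow_mem hx _) (zpow_mem hy _)) (pow_mem hz _)

def coordSumMod3 : ℤ × ℤ →+ ZMod 3 :=
  AddMonoidHom.mk' (fun v => ((v.1 + v.2 : ℤ) : ZMod 3)) fun v w => by
    simp only [Prod.fst_add, Prod.snd_add]; push_cast; ring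

theorem coordSumMod3_rot (v : ℤ × ℤ) : coordSumMod3 (rot v) = coordSumMod3 v := by
  simp only [coordSumMod3, rot, AddMonoidHom.mk'_apply, AddEquiv.coe_mk, Equiv.coe_fn_mk]
  rw [ZMod.intCast_eq_intCast_iff_dvd_sub]
  exact ⟨v.1, by ring⟩

theorem exists_rot_sub_eq (v : ℤ × ℤ) (h : (3 : ℤ) ∣ v.1 + v.2) : ∃ w, rot w - w = v := by
  obtain ⟨k, hk⟩ := h
  exact ⟨(-k, v.1 - 2 * k), by ext <;> simp [rot] <;> linarith⟩

def abelianizationHom : WallpaperP3 →* Multiplicative (ZMod 3 × ZMod 3) :=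
  lift ((AddMonoidHom.inl (ZMod 3) (ZMod 3)).comp coordSumMod3).toMultiplicative
    (AddMonoidHom.inr (ZMod 3) (ZMod 3)).toMultiplicative fun g => MonoidHom.ext fun v => by
      have h := MonoidHom.map_pow_apply_of_map_apply
        ((AddMonoidHom.inl _ _).comp coordSumMod3).toMultiplicative (a := rot.toMultiplicative) (h := (1 : Multiplicative (ZMod 3 × ZMod 3)))
        (fun v => by simpa using coordSumMod3_rot v.toAdd) g.toAdd.val v
      simpa [mul_inv_cancel_comm, rotAction, zmodPowHom_apply] using h

theorem toAdd_abelianizationHom (x : WallpaperP3) :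
    (abelianizationHom x).toAdd =
      (((x.left.toAdd.1 + x.left.toAdd.2 : ℤ) : ZMod 3), x.right.toAdd) := by
  ext <;> simp [abelianizationHom, lift, coordSumMod3]

theorem abelianizationHom_surjective : Function.Surjective abelianizationHom := by
  intro y
  refine ⟨⟨ofAdd ((y.toAdd.1.val : ℤ), 0), ofAdd y.toAdd.2⟩, toAdd.injective ?_⟩
  simp [toAdd_abelianizationHom]

theorem ker_abelianizationHom : abelianizationHom.ker = commutator WallpaperP3 := by
  refine le_antisymm (fun x hx => ?_) (Abelianization.commutator_subset_ker _)
  have hx' := congrArg toAdd (MonoidHom.mem_ker.mp hx)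
  rw [toAdd_abelianizationHom, toAdd_one, Prod.mk_eq_zero,
    ZMod.intCast_zmod_eq_zero_iff_dvd] at hx'
  obtain ⟨w, hw⟩ := exists_rot_sub_eq _ hx'.1
  have hcomm : x = ⁅(inr (ofAdd 1) : WallpaperP3), inl (ofAdd w)⁆ := by
    rw [commutatorElement_inr_inl]
    refine SemidirectProduct.ext ?_ ?_
    · rw [left_inl, rotAction_ofAdd_one, ← ofAdd_neg, ← ofAdd_add, ← sub_eq_add_neg, hw,
        ofAdd_toAdd]
    · rw [right_inl]
      exact toAdd_eq_zero.mp hx'.2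
  rw [hcomm]
  exact Subgroup.commutator_mem_commutator (Subgroup.mem_top _) (Subgroup.mem_top _)

noncomputable def abelianizationEquiv :
    Abelianization WallpaperP3 ≃* Multiplicative (ZMod 3 × ZMod 3) :=
  (QuotientGroup.quotientMulEquivOfEq ker_abelianizationHom.symm).trans
    (QuotientGroup.quotientKerEquivOfSurjective _ abelianizationHom_surjective)

def latticeMap {R : Type*} [CommRing R] (ζ : R) : ℤ × ℤ →+ R :=
  AddMonoidHom.mk' (fun v => v.1 + v.2 * ζ) fun v w => by
    simp only [Prod.fst_add, Prod.snd_add]; push_cast; ring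

theorem latticeMap_rot {R : Type*} [CommRing R] {ζ : R} (hζ : ζ ^ 2 + ζ + 1 = 0)
    (v : ℤ × ℤ) : latticeMap ζ (rot v) = ζ ^ 2 * latticeMap ζ v := by
  simp only [latticeMap, rot, AddMonoidHom.mk'_apply, AddEquiv.coe_mk, Equiv.coe_fn_mk]
  push_cast
  linear_combination (-(v.1 : R) + (v.2 : R) - v.2 * ζ) * hζ

theorem latticeMap_injective {ζ : ℂ} (hζ : ζ.im ≠ 0) : Function.Injective (latticeMap ζ) := by
  rw [injective_iff_map_eq_zero]
  rintro ⟨m, n⟩ h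
  have hn : n = 0 := by simpa [latticeMap, hζ] using congrArg Complex.im h
  subst hn
  simpa [latticeMap] using h

open Matrix.SpecialLinearGroup

variable {ζ : ℂ} (hζ : IsPrimitiveRoot ζ 3)

noncomputable def rootUnit : ℂˣ := (hζ.isUnit (by norm_num)).unit

theorem diagHom_rootUnit_pow_three : diagHom (rootUnit hζ) ^ 3 = 1 := by
  rw [← map_pow, show rootUnit hζ ^ 3 = 1 from Units.ext (by simp [rootUnit, hζ.pow_eq_one]),
    map_one]

noncomputable def toSL : WallpaperP3 →* SL(2, ℂ) :=
  lift (unipotentHom.comp (latticeMap ζ).toMultiplicative)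
    (zmodPowHom 3 _ (diagHom_rootUnit_pow_three hζ)) fun g => MonoidHom.ext fun v => by
      have h := (unipotentHom.comp (latticeMap ζ).toMultiplicative).map_pow_apply_of_map_apply
        (a := rot.toMultiplicative) (h := diagHom (rootUnit hζ)) (fun v => by
          simp [latticeMap_rot hζ.sq_add_self_add_one, diagHom_mul_unipotentHom_mul_inv,
            rootUnit])
        g.toAdd.val v
      simp only [MonoidHom.comp_apply, MulEquiv.coe_toMonoidHom, MulAut.conj_apply]
      exact h

theorem toSL_apply (x : WallpaperP3) :
    toSL hζ x = unipotentHom (ofAdd (latticeMap ζ x.left.toAdd)) *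
      diagHom (rootUnit hζ ^ x.right.toAdd.val) := by
  rw [map_pow]; rfl

noncomputable def toPSL : WallpaperP3 →* PSL(2, ℂ) :=
  (QuotientGroup.mk' _).comp (toSL hζ)

theorem toPSL_injective : Function.Injective (toPSL hζ) := by
  rw [injective_iff_map_eq_one]
  intro x hx
  have hcenter := (QuotientGroup.eq_one_iff _).mp hx
  rw [toSL_apply] at hcenter
  obtain ⟨hleft, hright⟩ := eq_zero_of_unipotentHom_mul_diagHom_mem_center _ _ hcenter
  have hv : x.left.toAdd = 0 :=
    latticeMap_injective hζ.im_ne_zero_of_three (by simpa using hleft)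
  have hk : x.right.toAdd.val = 0 := by
    have h3 : 3 ∣ x.right.toAdd.val * 2 := by
      rw [← hζ.pow_eq_one_iff_dvd, pow_mul]
      simpa [rootUnit, Units.ext_iff] using hright
    have := ZMod.val_lt x.right.toAdd
    omega
  exact SemidirectProduct.ext (toAdd_eq_zero.mp hv) (toAdd_eq_zero.mp ((ZMod.val_eq_zero _).mp hk))

theorem toPSL_inl :
    toPSL hζ (inl (ofAdd (1, 0))) = QuotientGroup.mk (unipotentHom (ofAdd 1)) := by
  simp [toPSL, toSL, latticeMap]

theorem toPSL_inr : toPSL hζ (inr (ofAdd 1)) = QuotientGroup.mk (diagHom (rootUnit hζ)) := by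
  simp [toPSL, toSL, zmodPowHom_apply, ZMod.val_one]

theorem range_toPSL : (toPSL hζ).range = Subgroup.closure
    {(QuotientGroup.mk (unipotentHom (ofAdd 1)) : PSL(2, ℂ)),
      QuotientGroup.mk (diagHom (rootUnit hζ))} := by
  rw [MonoidHom.range_eq_map, ← closure_inl_inr_eq_top, MonoidHom.map_closure, Set.image_pair,
    toPSL_inl, toPSL_inr]

end WallpaperP3

open Matrix.SpecialLinearGroup WallpaperP3

/-- For `ℓ = e^{2πi/3}`, the subgroup of `PSL(2, ℂ)` generated by the
images of `!![1, 1; 0, 1]` and `!![ℓ, 0; 0, ℓ⁻¹]` has abelianization `ℤ/3ℤ × ℤ/3ℤ`. -/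
theorem stmt_9 (ℓ : ℂ) (hℓ : ℓ = Complex.exp (2 * Real.pi * Complex.I / 3))
    (T R : SL(2, ℂ))
    (hT : (T : Matrix (Fin 2) (Fin 2) ℂ) = !![1, 1; 0, 1])
    (hR : (R : Matrix (Fin 2) (Fin 2) ℂ) = !![ℓ, 0; 0, ℓ⁻¹])
    (t r : PSL(2, ℂ))
    (ht : t = (QuotientGroup.mk T : PSL(2, ℂ)))
    (hr : r = (QuotientGroup.mk R : PSL(2, ℂ))) :
    Nonempty (Abelianization (Subgroup.closure ({t, r} : Set PSL(2, ℂ))) ≃*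
      Multiplicative (ZMod 3 × ZMod 3)) := by
  have hζ : IsPrimitiveRoot ℓ 3 := by
    simpa [hℓ] using Complex.isPrimitiveRoot_exp 3 (by norm_num)
  have hT' : T = unipotentHom (ofAdd 1) := Subtype.ext (by simp [hT])
  have hR' : R = diagHom (rootUnit hζ) := Subtype.ext (by simp [hR, rootUnit])
  have hrange : (toPSL hζ).range = Subgroup.closure {t, r} := by
    rw [range_toPSL, ht, hr, hT', hR']
  exact ⟨((MonoidHom.ofInjective (toPSL_injective hζ)).trans
    (MulEquiv.subgroupCongr hrange)).symm.abelianizationCongr.trans abelianizationEquiv⟩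
end
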